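/- arXiv:0912.2800 — 2 statements merged into one kernel-verified Lean document; each statement's English description precedes it below -/
import Mathlib

section
/- Let A be a symmetric positive definite n×n real matrix with condition number κ(A) = λ_max(A)/λ_min(A), and let C ≥ 1. Then the minimum of κ(S·A·S) over all symmetric positive definite matrices S with κ(S) ≤ C equals max{κ(A)/C², 1}. -/
/-!
If `v` is an eigenvector of `A` for `λ`, then at `x = S⁻¹ v` the quadratic form of `S A S` equals
`λ ‖S x‖²`, and `λ_min(S)² ‖x‖² ≤ ‖S x‖² ≤ λ_max(S)² ‖x‖²`. Taking `λ = λ_max(A)` and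
`λ = λ_min(A)` gives `λ_max(SAS) ≥ λ_max(A) λ_min(S)²` and `λ_min(SAS) ≤ λ_min(A) λ_max(S)²`,
hence `κ(SAS) ≥ κ(A) / κ(S)²`; also `κ(SAS) ≥ 1`.

The bound is attained by `S = f(A)` with `f(t) = √(min (λ_max(A) / t) C²)`, a truncation of
`A^(-1/2)`: then `S A S = g(A)` with `g(t) = min λ_max(A) (C² t)`, so
`κ(SAS) = λ_max(A) / min λ_max(A) (C² λ_min(A)) = max (κ(A) / C²) 1`, while `f` is antitone
with `f(λ_max(A)) = 1` and `f(λ_min(A)) ≤ C`, so `κ(S) ≤ C`.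
-/

open Matrix

/-- Condition number of a matrix: ratio of largest to smallest eigenvalue
(via the spectrum). -/
noncomputable def condNum {n : ℕ} (A : Matrix (Fin n) (Fin n) ℝ) : ℝ :=
  sSup (spectrum ℝ A) / sInf (spectrum ℝ A)

open scoped MatrixOrder

namespace Matrix

variable {ι : Type*} [Fintype ι]

lemma IsHermitian.dotProduct_mul_mul_mulVec {S : Matrix ι ι ℝ} (hS : S.IsHermitian)
    (A : Matrix ι ι ℝ) (x : ι → ℝ) :
    x ⬝ᵥ ((S * A * S) *ᵥ x) = (S *ᵥ x) ⬝ᵥ (A *ᵥ (S *ᵥ x)) := by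
  have hxS : x ᵥ* S = S *ᵥ x := by
    have := star_mulVec (M := S) (v := x)
    simp only [star_trivial, hS.eq] at this
    exact this.symm
  rw [Matrix.mul_assoc, ← mulVec_mulVec, dotProduct_mulVec, hxS, ← mulVec_mulVec]

lemma PosSemidef.mul_mul_self {A S : Matrix ι ι ℝ} (hA : A.PosSemidef) (hS : S.IsHermitian) :
    (S * A * S).PosSemidef := by
  have h := hA.conjTranspose_mul_mul_same S
  rwa [hS.eq] at h

variable [DecidableEq ι]

lemma exists_mulVec_eq_smul_of_mem_spectrum {K : Type*} [Field K] {A : Matrix ι ι K} {μ : K}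
    (hμ : μ ∈ spectrum K A) : ∃ v ≠ 0, A *ᵥ v = μ • v := by
  rw [← spectrum_toLin', ← Module.End.hasEigenvalue_iff_mem_spectrum] at hμ
  obtain ⟨v, hv, hv0⟩ := hμ.exists_hasEigenvector
  exact ⟨v, hv0, by simpa using hv⟩

lemma IsHermitian.cfc_mul_mul_cfc {B : Matrix ι ι ℝ} (hB : B.IsHermitian) (f : ℝ → ℝ) :
    cfc f B * B * cfc f B = cfc (fun t => f t * t * f t) B := by
  have hcont (g : ℝ → ℝ) : ContinuousOn g (spectrum ℝ B) := B.finite_real_spectrum.continuousOn g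
  rw [cfc_mul (fun t => f t * t) f B (hcont _) (hcont _),
    cfc_mul f (fun t => t) B (hcont _) (hcont _), cfc_id' ℝ B hB.isSelfAdjoint]

lemma IsHermitian.dotProduct_mulVec_cfc_sq {S : Matrix ι ι ℝ} (hS : S.IsHermitian) (x : ι → ℝ) :
    x ⬝ᵥ (cfc (fun t : ℝ => t ^ 2) S *ᵥ x) = (S *ᵥ x) ⬝ᵥ (S *ᵥ x) := by
  rw [cfc_pow_id S 2 hS.isSelfAdjoint, sq]
  simpa using hS.dotProduct_mul_mul_mulVec 1 x

lemma PosSemidef.monotoneOn_sq_spectrum {B : Matrix ι ι ℝ} (hB : B.PosSemidef) :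
    MonotoneOn (fun t : ℝ => t ^ 2) (spectrum ℝ B) := fun _ hs _ _ hst =>
  pow_le_pow_left₀ (spectrum_nonneg_of_nonneg hB.nonneg hs) hst 2

section Spectrum

variable [Nonempty ι] {B : Matrix ι ι ℝ}

lemma IsHermitian.isGreatest_sSup_spectrum (hB : B.IsHermitian) :
    IsGreatest (spectrum ℝ B) (sSup (spectrum ℝ B)) :=
  ⟨(ContinuousFunctionalCalculus.spectrum_nonempty B hB.isSelfAdjoint).csSup_mem
    B.finite_real_spectrum, fun _ hx => le_csSup B.finite_real_spectrum.bddAbove hx⟩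

lemma IsHermitian.isLeast_sInf_spectrum (hB : B.IsHermitian) :
    IsLeast (spectrum ℝ B) (sInf (spectrum ℝ B)) :=
  ⟨(ContinuousFunctionalCalculus.spectrum_nonempty B hB.isSelfAdjoint).csInf_mem
    B.finite_real_spectrum, fun _ hx => csInf_le B.finite_real_spectrum.bddBelow hx⟩

lemma IsHermitian.sInf_spectrum_le_sSup_spectrum (hB : B.IsHermitian) :
    sInf (spectrum ℝ B) ≤ sSup (spectrum ℝ B) :=
  hB.isGreatest_sSup_spectrum.2 hB.isLeast_sInf_spectrum.1

lemma PosSemidef.sInf_spectrum_nonneg (hB : B.PosSemidef) : 0 ≤ sInf (spectrum ℝ B) :=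
  spectrum_nonneg_of_nonneg hB.nonneg hB.isHermitian.isLeast_sInf_spectrum.1

lemma PosDef.sInf_spectrum_pos (hB : B.PosDef) : 0 < sInf (spectrum ℝ B) :=
  hB.isStrictlyPositive.spectrum_pos hB.isHermitian.isLeast_sInf_spectrum.1

lemma IsHermitian.dotProduct_mulVec_le (hB : B.IsHermitian) (x : ι → ℝ) :
    x ⬝ᵥ (B *ᵥ x) ≤ sSup (spectrum ℝ B) * (x ⬝ᵥ x) := by
  have h := ((le_algebraMap_iff_spectrum_le hB.isSelfAdjoint).mpr
    hB.isGreatest_sSup_spectrum.2).dotProduct_mulVec_nonneg x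
  simpa [Algebra.algebraMap_eq_smul_one, sub_mulVec, smul_mulVec] using h

lemma IsHermitian.le_dotProduct_mulVec (hB : B.IsHermitian) (x : ι → ℝ) :
    sInf (spectrum ℝ B) * (x ⬝ᵥ x) ≤ x ⬝ᵥ (B *ᵥ x) := by
  have h := ((algebraMap_le_iff_le_spectrum hB.isSelfAdjoint).mpr
    hB.isLeast_sInf_spectrum.2).dotProduct_mulVec_nonneg x
  simpa [Algebra.algebraMap_eq_smul_one, sub_mulVec, smul_mulVec] using h

lemma IsHermitian.sSup_spectrum_cfc_of_monotoneOn (hB : B.IsHermitian) {f : ℝ → ℝ}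
    (hf : MonotoneOn f (spectrum ℝ B)) :
    sSup (spectrum ℝ (cfc f B)) = f (sSup (spectrum ℝ B)) := by
  rw [cfc_map_spectrum f B (hf := B.finite_real_spectrum.continuousOn f) (ha := hB.isSelfAdjoint)]
  exact (hf.map_isGreatest hB.isGreatest_sSup_spectrum).csSup_eq

lemma IsHermitian.sInf_spectrum_cfc_of_monotoneOn (hB : B.IsHermitian) {f : ℝ → ℝ}
    (hf : MonotoneOn f (spectrum ℝ B)) :
    sInf (spectrum ℝ (cfc f B)) = f (sInf (spectrum ℝ B)) := by
  rw [cfc_map_spectrum f B (hf := B.finite_real_spectrum.continuousOn f) (ha := hB.isSelfAdjoint)]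
  exact (hf.map_isLeast hB.isLeast_sInf_spectrum).csInf_eq

lemma IsHermitian.sSup_spectrum_cfc_of_antitoneOn (hB : B.IsHermitian) {f : ℝ → ℝ}
    (hf : AntitoneOn f (spectrum ℝ B)) :
    sSup (spectrum ℝ (cfc f B)) = f (sInf (spectrum ℝ B)) := by
  rw [cfc_map_spectrum f B (hf := B.finite_real_spectrum.continuousOn f) (ha := hB.isSelfAdjoint)]
  exact (hf.map_isLeast hB.isLeast_sInf_spectrum).csSup_eq

lemma IsHermitian.sInf_spectrum_cfc_of_antitoneOn (hB : B.IsHermitian) {f : ℝ → ℝ}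
    (hf : AntitoneOn f (spectrum ℝ B)) :
    sInf (spectrum ℝ (cfc f B)) = f (sSup (spectrum ℝ B)) := by
  rw [cfc_map_spectrum f B (hf := B.finite_real_spectrum.continuousOn f) (ha := hB.isSelfAdjoint)]
  exact (hf.map_isGreatest hB.isGreatest_sSup_spectrum).csInf_eq

lemma PosSemidef.sq_sInf_spectrum_mul_le (hB : B.PosSemidef) (x : ι → ℝ) :
    sInf (spectrum ℝ B) ^ 2 * (x ⬝ᵥ x) ≤ (B *ᵥ x) ⬝ᵥ (B *ᵥ x) := by
  have h := (cfc_predicate (fun t : ℝ => t ^ 2) B).isHermitian.le_dotProduct_mulVec x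
  rwa [hB.isHermitian.sInf_spectrum_cfc_of_monotoneOn hB.monotoneOn_sq_spectrum,
    hB.isHermitian.dotProduct_mulVec_cfc_sq] at h

lemma PosSemidef.le_sq_sSup_spectrum_mul (hB : B.PosSemidef) (x : ι → ℝ) :
    (B *ᵥ x) ⬝ᵥ (B *ᵥ x) ≤ sSup (spectrum ℝ B) ^ 2 * (x ⬝ᵥ x) := by
  have h := (cfc_predicate (fun t : ℝ => t ^ 2) B).isHermitian.dotProduct_mulVec_le x
  rwa [hB.isHermitian.sSup_spectrum_cfc_of_monotoneOn hB.monotoneOn_sq_spectrum,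
    hB.isHermitian.dotProduct_mulVec_cfc_sq] at h

end Spectrum

section Congruence

variable {A S : Matrix ι ι ℝ}

lemma PosDef.exists_dotProduct_mul_mul_mulVec_eq (hS : S.PosDef) {μ : ℝ}
    (hμ : μ ∈ spectrum ℝ A) :
    ∃ x ≠ 0, x ⬝ᵥ ((S * A * S) *ᵥ x) = μ * ((S *ᵥ x) ⬝ᵥ (S *ᵥ x)) := by
  obtain ⟨v, hv0, hv⟩ := exists_mulVec_eq_smul_of_mem_spectrum hμ
  have hSx : S *ᵥ (S⁻¹ *ᵥ v) = v := by
    rw [mulVec_mulVec, mul_nonsing_inv S (isUnit_iff_isUnit_det S |>.mp hS.isUnit), one_mulVec]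
  refine ⟨S⁻¹ *ᵥ v, fun h => hv0 (by rw [← hSx, h, mulVec_zero]), ?_⟩
  rw [hS.isHermitian.dotProduct_mul_mul_mulVec, hSx, hv, dotProduct_smul, smul_eq_mul]

lemma PosDef.mul_mul_self (hA : A.PosDef) (hS : S.PosDef) : (S * A * S).PosDef := by
  have h := hA.conjTranspose_mul_mul_same (mulVec_injective_iff_isUnit.mpr hS.isUnit)
  rwa [hS.isHermitian.eq] at h

variable [Nonempty ι]

lemma PosSemidef.le_sSup_spectrum_mul_mul_self (hA : A.PosSemidef) (hS : S.PosDef) :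
    sSup (spectrum ℝ A) * sInf (spectrum ℝ S) ^ 2 ≤ sSup (spectrum ℝ (S * A * S)) := by
  obtain ⟨x, hx0, hx⟩ := hS.exists_dotProduct_mul_mul_mulVec_eq
    hA.isHermitian.isGreatest_sSup_spectrum.1
  have hM : 0 ≤ sSup (spectrum ℝ A) :=
    hA.sInf_spectrum_nonneg.trans hA.isHermitian.sInf_spectrum_le_sSup_spectrum
  refine le_of_mul_le_mul_right ?_ (by simpa using dotProduct_star_self_pos_iff.mpr hx0)
  calc sSup (spectrum ℝ A) * sInf (spectrum ℝ S) ^ 2 * (x ⬝ᵥ x)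
      ≤ sSup (spectrum ℝ A) * ((S *ᵥ x) ⬝ᵥ (S *ᵥ x)) := by
        rw [mul_assoc]; exact mul_le_mul_of_nonneg_left (hS.posSemidef.sq_sInf_spectrum_mul_le x) hM
    _ = x ⬝ᵥ ((S * A * S) *ᵥ x) := hx.symm
    _ ≤ sSup (spectrum ℝ (S * A * S)) * (x ⬝ᵥ x) :=
        (hA.mul_mul_self hS.isHermitian).isHermitian.dotProduct_mulVec_le x

lemma PosSemidef.sInf_spectrum_mul_mul_self_le (hA : A.PosSemidef) (hS : S.PosDef) :
    sInf (spectrum ℝ (S * A * S)) ≤ sInf (spectrum ℝ A) * sSup (spectrum ℝ S) ^ 2 := by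
  obtain ⟨x, hx0, hx⟩ := hS.exists_dotProduct_mul_mul_mulVec_eq
    hA.isHermitian.isLeast_sInf_spectrum.1
  refine le_of_mul_le_mul_right ?_ (by simpa using dotProduct_star_self_pos_iff.mpr hx0)
  calc sInf (spectrum ℝ (S * A * S)) * (x ⬝ᵥ x)
      ≤ x ⬝ᵥ ((S * A * S) *ᵥ x) :=
        (hA.mul_mul_self hS.isHermitian).isHermitian.le_dotProduct_mulVec x
    _ = sInf (spectrum ℝ A) * ((S *ᵥ x) ⬝ᵥ (S *ᵥ x)) := hx
    _ ≤ sInf (spectrum ℝ A) * sSup (spectrum ℝ S) ^ 2 * (x ⬝ᵥ x) := by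
        rw [mul_assoc]
        exact mul_le_mul_of_nonneg_left (hS.posSemidef.le_sq_sSup_spectrum_mul x)
          hA.sInf_spectrum_nonneg

end Congruence

end Matrix

section ConditionNumber

variable {n : ℕ} [NeZero n] {A S : Matrix (Fin n) (Fin n) ℝ}

lemma Matrix.PosDef.one_le_condNum (hA : A.PosDef) : 1 ≤ condNum A :=
  (one_le_div hA.sInf_spectrum_pos).mpr hA.isHermitian.sInf_spectrum_le_sSup_spectrum

lemma Matrix.PosDef.condNum_div_sq_le_condNum_mul_mul_self (hA : A.PosDef) (hS : S.PosDef) :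
    condNum A / condNum S ^ 2 ≤ condNum (S * A * S) := by
  have hP : (S * A * S).PosDef := hA.mul_mul_self hS
  have hb := hA.sInf_spectrum_pos
  have hs := hS.sInf_spectrum_pos
  have ht := hs.trans_le hS.isHermitian.sInf_spectrum_le_sSup_spectrum
  have hq := hP.sInf_spectrum_pos
  have hp := hq.trans_le hP.isHermitian.sInf_spectrum_le_sSup_spectrum
  unfold condNum
  calc sSup (spectrum ℝ A) / sInf (spectrum ℝ A) /
        (sSup (spectrum ℝ S) / sInf (spectrum ℝ S)) ^ 2
      = sSup (spectrum ℝ A) * sInf (spectrum ℝ S) ^ 2 /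
          (sInf (spectrum ℝ A) * sSup (spectrum ℝ S) ^ 2) := by
        field_simp
    _ ≤ sSup (spectrum ℝ (S * A * S)) / sInf (spectrum ℝ (S * A * S)) :=
        div_le_div₀ hp.le (hA.posSemidef.le_sSup_spectrum_mul_mul_self hS) hq
          (hA.posSemidef.sInf_spectrum_mul_mul_self_le hS)

lemma Matrix.PosDef.exists_condNum_le_and_condNum_mul_mul_self_eq (hA : A.PosDef) {C : ℝ}
    (hC : 1 ≤ C) :
    ∃ S : Matrix (Fin n) (Fin n) ℝ, S.PosDef ∧ condNum S ≤ C ∧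
      condNum (S * A * S) = max (condNum A / C ^ 2) 1 := by
  set M := sSup (spectrum ℝ A)
  set m := sInf (spectrum ℝ A)
  have hm : 0 < m := hA.sInf_spectrum_pos
  have hM : 0 < M := hm.trans_le hA.isHermitian.sInf_spectrum_le_sSup_spectrum
  have hC2 : 1 ≤ C ^ 2 := one_le_pow₀ hC
  have hspec_pos : ∀ t ∈ spectrum ℝ A, 0 < t := fun _ ht => hA.isStrictlyPositive.spectrum_pos ht
  set f : ℝ → ℝ := fun t => √(min (M / t) (C ^ 2))
  have hf_pos : ∀ t ∈ spectrum ℝ A, 0 < f t := fun t ht =>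
    Real.sqrt_pos.mpr (lt_min (div_pos hM (hspec_pos t ht)) (by positivity))
  have hf_anti : AntitoneOn f (spectrum ℝ A) := fun s hs t _ hst =>
    Real.sqrt_le_sqrt (min_le_min_right _ (div_le_div_of_nonneg_left hM.le (hspec_pos s hs) hst))
  have hf_M : f M = 1 := by simp [f, div_self hM.ne', min_eq_left hC2]
  have hg_mono : Monotone fun t => min M (C ^ 2 * t) := fun s t hst =>
    min_le_min_left _ (mul_le_mul_of_nonneg_left hst (by positivity))
  have hSAS : cfc f A * A * cfc f A = cfc (fun t => min M (C ^ 2 * t)) A := by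
    rw [hA.isHermitian.cfc_mul_mul_cfc]
    refine cfc_congr fun t ht => ?_
    have ht0 := hspec_pos t ht
    rw [mul_right_comm, Real.mul_self_sqrt (le_min (div_pos hM ht0).le (by positivity)),
      min_mul_of_nonneg _ _ ht0.le, div_mul_cancel₀ _ ht0.ne', mul_comm]
  refine ⟨cfc f A, ?_, ?_, ?_⟩
  · exact isStrictlyPositive_iff_posDef.mp <| (cfc_isStrictlyPositive_iff f A
      (A.finite_real_spectrum.continuousOn f) hA.isHermitian.isSelfAdjoint).mpr hf_pos
  · unfold condNum
    rw [hA.isHermitian.sSup_spectrum_cfc_of_antitoneOn hf_anti,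
      hA.isHermitian.sInf_spectrum_cfc_of_antitoneOn hf_anti, hf_M, div_one]
    calc f m ≤ √(C ^ 2) := Real.sqrt_le_sqrt (min_le_right _ _)
      _ = C := Real.sqrt_sq (zero_le_one.trans hC)
  · unfold condNum
    rw [hSAS, hA.isHermitian.sSup_spectrum_cfc_of_monotoneOn (hg_mono.monotoneOn _),
      hA.isHermitian.sInf_spectrum_cfc_of_monotoneOn (hg_mono.monotoneOn _),
      min_eq_left (le_mul_of_one_le_left hM.le hC2)]
    rcases le_total M (C ^ 2 * m) with h | h
    · rw [min_eq_left h, div_self hM.ne', max_eq_right]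
      rwa [div_div, div_le_one (by positivity), mul_comm]
    · rw [min_eq_right h, max_eq_left, div_div, mul_comm]
      rwa [div_div, one_le_div (by positivity), mul_comm]

end ConditionNumber

theorem stmt_0 {n : ℕ} (hn : 1 ≤ n) (A : Matrix (Fin n) (Fin n) ℝ) (hA : A.PosDef)
    (C : ℝ) (hC : 1 ≤ C) :
    IsLeast {x : ℝ | ∃ S : Matrix (Fin n) (Fin n) ℝ,
        S.PosDef ∧ condNum S ≤ C ∧ x = condNum (S * A * S)}
      (max (condNum A / C ^ 2) 1) := by
  have : NeZero n := ⟨by omega⟩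
  refine ⟨?_, ?_⟩
  · obtain ⟨S, hS, hSC, hSAS⟩ := hA.exists_condNum_le_and_condNum_mul_mul_self_eq hC
    exact ⟨S, hS, hSC, hSAS.symm⟩
  · rintro _ ⟨S, hS, hSC, rfl⟩
    refine max_le ?_ (hA.mul_mul_self hS).one_le_condNum
    have hA1 := hA.one_le_condNum
    have hS1 := hS.one_le_condNum
    calc condNum A / C ^ 2 ≤ condNum A / condNum S ^ 2 :=
          div_le_div_of_nonneg_left (by linarith) (by positivity) (by gcongr)
      _ ≤ condNum (S * A * S) := hA.condNum_div_sq_le_condNum_mul_mul_self hS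
end

section
/- Let K be a symmetric invertible n×n real matrix (n ≥ 2) all of whose entries are nonzero, let λ > 0, and let R be an invertible n×n matrix. Suppose that for every diagonal matrix D with diagonal entries ranging over a nonempty open subset S of ℝ (each entry independently), the matrix M = (1/n)·R·D·K + λ·R is symmetric. If S contains at least two points, then there exists a constant c ∈ ℝ such that R = c·K. -/
/-!
Subtracting the symmetry conditions at two admissible `s` kills `λ R`, so
`R * diagonal (s - s') * K` is symmetric; taking `s - s'` supported at a single index `i`
gives `R j i * K i k = R k i * K i j`. With `k = i` this says `R = K * diagonal c`. Then
`R * diagonal s * K = K * diagonal (c * s) * K` is symmetric, so `λ R` and hence `R` is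
symmetric, and comparing `K i j * c j` with `K j i * c i` forces `c` to be constant because
the entries of `K` do not vanish.
-/

namespace Matrix

lemma IsHermitian.of_smul_of_ne_zero {ι : Type*} {A : Matrix ι ι ℝ} {t : ℝ} (ht : t ≠ 0)
    (h : (t • A).IsHermitian) : A.IsHermitian :=
  letI := invertibleOfNonzero ht
  h.of_smul (IsSelfAdjoint.all t)

variable {ι : Type*} [Fintype ι] [DecidableEq ι]

lemma isHermitian_mul_diagonal_sub_mul {R K : Matrix ι ι ℝ} {μ lam : ℝ} (hμ : μ ≠ 0)
    {s s' : ι → ℝ} (hs : (μ • (R * diagonal s * K) + lam • R).IsHermitian)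
    (hs' : (μ • (R * diagonal s' * K) + lam • R).IsHermitian) :
    (R * diagonal (s - s') * K).IsHermitian := by
  refine IsHermitian.of_smul_of_ne_zero hμ ?_
  rw [show diagonal (s - s') = diagonal s - diagonal s' from (diagonal_sub s s').symm,
    Matrix.mul_sub, Matrix.sub_mul, smul_sub, ← add_sub_add_right_eq_sub _ _ (lam • R)]
  exact hs.sub hs'

lemma mul_diagonal_single_mul_apply (R K : Matrix ι ι ℝ) (i j k : ι) (t : ℝ) :
    (R * diagonal (Pi.single i t) * K) j k = R j i * t * K i k := by
  rw [mul_apply]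
  simp [mul_diagonal, Pi.single_apply]

lemma mul_apply_mul_eq_of_isHermitian_mul_diagonal_single_mul {R K : Matrix ι ι ℝ} {i : ι}
    {t : ℝ} (ht : t ≠ 0) (h : (R * diagonal (Pi.single i t) * K).IsHermitian) (j k : ι) :
    R j i * K i k = R k i * K i j := by
  have hjk := h.apply k j
  rw [star_trivial, mul_diagonal_single_mul_apply, mul_diagonal_single_mul_apply] at hjk
  exact mul_right_cancel₀ ht (by linear_combination hjk)

lemma exists_eq_mul_diagonal_of_mul_apply_mul_eq {R K : Matrix ι ι ℝ} (hK : K.IsHermitian)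
    (hKdiag : ∀ i, K i i ≠ 0) (h : ∀ i j k, R j i * K i k = R k i * K i j) :
    ∃ c : ι → ℝ, R = K * diagonal c := by
  refine ⟨fun i => R i i / K i i, ?_⟩
  ext j i
  rw [mul_diagonal, ← star_trivial (K j i), hK.apply, mul_div_assoc', eq_div_iff (hKdiag i)]
  linear_combination h i j i

lemma IsHermitian.mul_diagonal_mul_diagonal_mul {K : Matrix ι ι ℝ} (hK : K.IsHermitian)
    (c s : ι → ℝ) : (K * diagonal c * diagonal s * K).IsHermitian := by
  rw [Matrix.mul_assoc K, diagonal_mul_diagonal]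
  simpa only [hK.eq] using isHermitian_mul_mul_conjTranspose K (isHermitian_diagonal _)

lemma eq_of_isHermitian_mul_diagonal {K : Matrix ι ι ℝ} (hK : K.IsHermitian)
    (hKne : ∀ i j, K i j ≠ 0) {c : ι → ℝ} (h : (K * diagonal c).IsHermitian) (i j : ι) :
    c i = c j := by
  have hij := h.apply i j
  rw [star_trivial, mul_diagonal, mul_diagonal, ← star_trivial (K j i), hK.apply] at hij
  exact mul_left_cancel₀ (hKne i j) hij

theorem exists_eq_smul_of_forall_isHermitian [Nonempty ι] {K R : Matrix ι ι ℝ}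
    (hK : K.IsHermitian) (hKne : ∀ i j, K i j ≠ 0) {μ lam : ℝ} (hμ : μ ≠ 0) (hlam : lam ≠ 0)
    {S : Set ℝ} (hS : ∃ a b, a ∈ S ∧ b ∈ S ∧ a ≠ b)
    (hsym : ∀ s : ι → ℝ, (∀ i, s i ∈ S) → (μ • (R * diagonal s * K) + lam • R).IsHermitian) :
    ∃ c : ℝ, R = c • K := by
  obtain ⟨a, b, ha, hb, hab⟩ := hS
  have hconst := hsym (fun _ => a) fun _ => ha
  have hcolumn : ∀ i j k, R j i * K i k = R k i * K i j := by
    intro i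
    have hupd : ∀ m, Function.update (fun _ => a) i b m ∈ S := by
      intro m
      rcases eq_or_ne m i with rfl | h <;> simp [*]
    have hsingle : Function.update (fun _ => a) i b - (fun _ => a) = Pi.single i (b - a) := by
      ext m
      rcases eq_or_ne m i with rfl | h <;> simp [*]
    refine mul_apply_mul_eq_of_isHermitian_mul_diagonal_single_mul (sub_ne_zero.2 hab.symm) ?_
    rw [← hsingle]
    exact isHermitian_mul_diagonal_sub_mul hμ (hsym _ hupd) hconst
  obtain ⟨c, rfl⟩ := exists_eq_mul_diagonal_of_mul_apply_mul_eq hK (fun i => hKne i i) hcolumn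
  have hRherm : (K * diagonal c).IsHermitian := by
    refine IsHermitian.of_smul_of_ne_zero hlam ?_
    have h := hconst.sub
      ((hK.mul_diagonal_mul_diagonal_mul c fun _ => a).smul (IsSelfAdjoint.all μ))
    rwa [add_sub_cancel_left] at h
  obtain ⟨i₀⟩ := ‹Nonempty ι›
  refine ⟨c i₀, ?_⟩
  rw [show c = fun _ => c i₀ from funext (eq_of_isHermitian_mul_diagonal hK hKne hRherm · i₀),
    ← smul_one_eq_diagonal, Matrix.mul_smul, Matrix.mul_one]

end Matrix

open Matrix

theorem stmt_19_general {n : ℕ} (hn : 2 ≤ n) (K R : Matrix (Fin n) (Fin n) ℝ)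
    (hKsym : K.IsHermitian)
    (hKne : ∀ i j, K i j ≠ 0)
    (lam : ℝ) (hlam : 0 < lam)
    (S : Set ℝ)
    (hsym : ∀ s : Fin n → ℝ, (∀ i, s i ∈ S) →
      ((n : ℝ)⁻¹ • (R * Matrix.diagonal s * K) + lam • R).IsHermitian)
    (hS2 : ∃ a b : ℝ, a ∈ S ∧ b ∈ S ∧ a ≠ b) :
    ∃ c : ℝ, R = c • K :=
  haveI : Nonempty (Fin n) := ⟨⟨0, by omega⟩⟩
  exists_eq_smul_of_forall_isHermitian hKsym hKne (inv_ne_zero (Nat.cast_ne_zero.2 (by omega)))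
    hlam.ne' hS2 hsym

theorem stmt_19 {n : ℕ} (hn : 2 ≤ n) (K R : Matrix (Fin n) (Fin n) ℝ)
    (hKsym : K.IsHermitian) (hKinv : IsUnit K.det)
    (hKne : ∀ i j, K i j ≠ 0)
    (lam : ℝ) (hlam : 0 < lam)
    (hRinv : IsUnit R.det)
    (S : Set ℝ) (hSopen : IsOpen S) (hSne : S.Nonempty)
    (hsym : ∀ s : Fin n → ℝ, (∀ i, s i ∈ S) →
      ((n : ℝ)⁻¹ • (R * Matrix.diagonal s * K) + lam • R).IsHermitian)
    (hS2 : ∃ a b : ℝ, a ∈ S ∧ b ∈ S ∧ a ≠ b) :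
    ∃ c : ℝ, R = c • K :=
  stmt_19_general hn K R hKsym hKne lam hlam S hsym hS2
end
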